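/- For odd n ≥ 5, the automaton ℬ_n is synchronizing, the word (a b^{n-2})^{(n-3)/2} a b^{n-3} (a b^{n-2})^{(n-3)/2} a of length n² - 3n + 2 is a reset word for it, and its reset threshold is exactly n² - 3n + 2. -/
import Mathlib


/-- The state reached from `q` by reading the word `w`. -/
def run {Q A : Type*} (δ : Q → A → Q) (q : Q) (w : List A) : Q := w.foldl δ q

/-- The automaton `ℬ_n` on states `0,…,n-1` (paper's `1,…,n` shifted by one):
the letter `a` (= `true`) fixes all states except `n-2 ↦ 0` and `n-1 ↦ 1`;
the letter `b` (= `false`) is the cyclic shift `i ↦ i+1 (mod n)`. -/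
def bAut (n : ℕ) (q : ZMod n) : Bool → ZMod n
  | true => if q.val = n - 2 then 0 else if q.val = n - 1 then 1 else q
  | false => q + 1

namespace Stmt17

def jumps (n : ℕ) : ZMod n → List Bool → ℕ
  | _, [] => 0
  | q, false :: r => jumps n (q + 1) r
  | q, true :: r =>
      (if q.val = n - 2 ∨ q.val = n - 1 then 1 else 0) + jumps n (bAut n q true) r

theorem run_cons {Q A : Type*} (δ : Q → A → Q) (q : Q) (x : A) (w : List A) :
    run δ q (x :: w) = run δ (δ q x) w := rfl

theorem run_append {Q A : Type*} (δ : Q → A → Q) (q : Q) (u v : List A) :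
    run δ q (u ++ v) = run δ (run δ q u) v := List.foldl_append ..

variable {n : ℕ}

theorem bAut_false (q : ZMod n) : bAut n q false = q + 1 := rfl

theorem bAut_true_of_ne (q : ZMod n) (h2 : q.val ≠ n - 2) (h1 : q.val ≠ n - 1) :
    bAut n q true = q := by
  show (if q.val = n - 2 then 0 else if q.val = n - 1 then 1 else q) = q
  rw [if_neg h2, if_neg h1]

theorem bAut_true_hi2 (q : ZMod n) (h2 : q.val = n - 2) : bAut n q true = 0 := by
  show (if q.val = n - 2 then 0 else if q.val = n - 1 then 1 else q) = 0
  rw [if_pos h2]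

theorem bAut_true_hi1 (q : ZMod n) (hn : 5 ≤ n) (h1 : q.val = n - 1) : bAut n q true = 1 := by
  show (if q.val = n - 2 then 0 else if q.val = n - 1 then 1 else q) = 1
  rw [if_neg (by omega : ¬ q.val = n - 2), if_pos h1]

theorem jumps_false (q : ZMod n) (r : List Bool) :
    jumps n q (false :: r) = jumps n (q + 1) r := rfl

theorem jumps_true (q : ZMod n) (r : List Bool) :
    jumps n q (true :: r) =
      (if q.val = n - 2 ∨ q.val = n - 1 then 1 else 0) + jumps n (bAut n q true) r := rfl

theorem natCast_val_eq [NeZero n] (q : ZMod n) : ((q.val : ℕ) : ZMod n) = q := by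
  rw [ZMod.natCast_val, ZMod.cast_id]

theorem cast_n_sub (hn : 5 ≤ n) (k : ℕ) (hk : k ≤ n) : ((n - k : ℕ) : ZMod n) = -(k : ZMod n) := by
  have h : ((n - k : ℕ) : ZMod n) + ((k : ℕ) : ZMod n) = ((n : ℕ) : ZMod n) := by
    rw [← Nat.cast_add]; congr 1; omega
  simp only [ZMod.natCast_self] at h
  push_cast at h ⊢
  linear_combination h

theorem val_n_sub (hn : 5 ≤ n) (k : ℕ) (hk : 1 ≤ k) (hk' : k ≤ n) :
    ((n - k : ℕ) : ZMod n).val = n - k := by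
  haveI : NeZero n := ⟨by omega⟩
  exact ZMod.val_natCast_of_lt (by omega)

/-- The key modular identity: the endpoint is start + (#b) + 2·(#jumps). -/
theorem run_eq_jumps (hn : 5 ≤ n) (w : List Bool) (q : ZMod n) :
    run (bAut n) q w = q + (w.count false : ZMod n) + 2 * (jumps n q w : ZMod n) := by
  haveI : NeZero n := ⟨by omega⟩
  induction w generalizing q with
  | nil => simp [run, jumps]
  | cons x r ih =>
    cases x with
    | false =>
      rw [run_cons, bAut_false, ih, jumps_false]
      have hc : ((false :: r).count false : ℕ) = r.count false + 1 := by
        simp [List.count_cons]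
      rw [hc]; push_cast; ring
    | true =>
      have hc : ((true :: r).count false : ℕ) = r.count false := by
        simp [List.count_cons]
      by_cases h2 : q.val = n - 2
      · have hq : q = ((n - 2 : ℕ) : ZMod n) := by rw [← natCast_val_eq q, h2]
        have hb := bAut_true_hi2 q h2
        rw [run_cons, hb, ih, jumps_true, hb, if_pos (Or.inl h2), hc, hq,
          cast_n_sub hn 2 (by omega)]
        push_cast; ring
      · by_cases h1 : q.val = n - 1
        · have hq : q = ((n - 1 : ℕ) : ZMod n) := by rw [← natCast_val_eq q, h1]
          have hb := bAut_true_hi1 q hn h1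
          rw [run_cons, hb, ih, jumps_true, hb, if_pos (Or.inr h1), hc, hq,
            cast_n_sub hn 1 (by omega)]
          push_cast; ring
        · have hb := bAut_true_of_ne q h2 h1
          rw [run_cons, hb, ih, jumps_true, hb, if_neg (by tauto), hc]
          push_cast; ring

theorem jumps_le_countA (w : List Bool) (q : ZMod n) :
    jumps n q w ≤ w.count true := by
  induction w generalizing q with
  | nil => simp [jumps]
  | cons x r ih =>
    cases x with
    | false =>
      rw [jumps_false]
      simpa [List.count_cons] using ih (q + 1)
    | true =>
      rw [jumps_true]
      have := ih (bAut n q true)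
      have hc : (true :: r).count true = r.count true + 1 := by simp
      rw [hc]
      split <;> omega

/-- The potential inequality giving the lower bound on the number of `b`'s. -/
theorem countB_ge (hn : 5 ≤ n) (w : List Bool) (q ℓ : ZMod n) (hℓ : ℓ = 0 ∨ ℓ = 1) :
    jumps n q w * (n - 2) ≤ w.count false + (q - ℓ).val + ℓ.val := by
  haveI : NeZero n := ⟨by omega⟩
  induction w generalizing q ℓ with
  | nil => simp [jumps]
  | cons x r ih =>
    cases x with
    | false =>
      rw [jumps_false]
      have h1 := ih (q + 1) ℓ hℓ
      have h2 : (q + 1 - ℓ).val ≤ (q - ℓ).val + 1 := by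
        have : q + 1 - ℓ = (q - ℓ) + 1 := by ring
        rw [this]
        calc ((q - ℓ) + 1).val ≤ (q - ℓ).val + (1 : ZMod n).val := ZMod.val_add_le _ _
          _ ≤ (q - ℓ).val + 1 := by
              have : (1 : ZMod n).val = 1 := by rw [ZMod.val_one_eq_one_mod]; exact Nat.mod_eq_of_lt (by omega)
              omega
      have hc : (false :: r).count false = r.count false + 1 := by simp [List.count_cons]
      rw [hc]; omega
    | true =>
      have hc : (true :: r).count false = r.count false := by simp [List.count_cons]
      rw [jumps_true, hc]
      by_cases h2 : q.val = n - 2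
      · rw [bAut_true_hi2 q h2, if_pos (Or.inl h2)]
        have h1 := ih 0 0 (Or.inl rfl)
        simp only [sub_zero, ZMod.val_zero, add_zero] at h1
        -- need : (1 + jumps 0 r) * (n-2) ≤ count + (q - ℓ).val + ℓ.val
        have hkey : n - 2 ≤ (q - ℓ).val + ℓ.val := by
          rcases hℓ with h | h
          · subst h; simp only [sub_zero, ZMod.val_zero, add_zero]; omega
          · subst h
            have : q - 1 = ((n - 3 : ℕ) : ZMod n) := by
              have hq : q = ((n - 2 : ℕ) : ZMod n) := by rw [← natCast_val_eq q, h2]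
              rw [hq, cast_n_sub hn 2 (by omega), cast_n_sub hn 3 (by omega)]
              push_cast; ring
            rw [this, val_n_sub hn 3 (by omega) (by omega)]
            have : (1 : ZMod n).val = 1 := by rw [ZMod.val_one_eq_one_mod]; exact Nat.mod_eq_of_lt (by omega)
            omega
        have hexp : (1 + jumps n 0 r) * (n - 2) = (n - 2) + jumps n 0 r * (n - 2) := by ring
        rw [hexp]; omega
      · by_cases h1 : q.val = n - 1
        · rw [bAut_true_hi1 q hn h1, if_pos (Or.inr h1)]
          have hih := ih 1 1 (Or.inr rfl)
          have hv1 : (1 : ZMod n).val = 1 := by rw [ZMod.val_one_eq_one_mod]; exact Nat.mod_eq_of_lt (by omega)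
          simp only [sub_self, ZMod.val_zero, add_zero, hv1] at hih
          have hkey : n - 1 ≤ (q - ℓ).val + ℓ.val := by
            rcases hℓ with h | h
            · subst h; simp only [sub_zero, ZMod.val_zero, add_zero]; omega
            · subst h
              have : q - 1 = ((n - 2 : ℕ) : ZMod n) := by
                have hq : q = ((n - 1 : ℕ) : ZMod n) := by rw [← natCast_val_eq q, h1]
                rw [hq, cast_n_sub hn 1 (by omega), cast_n_sub hn 2 (by omega)]
                push_cast; ring
              rw [this, val_n_sub hn 2 (by omega) (by omega), hv1]
              omega
          have hexp : (1 + jumps n 1 r) * (n - 2) = (n - 2) + jumps n 1 r * (n - 2) := by ring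
          rw [hexp]; omega
        · rw [bAut_true_of_ne q h2 h1, if_neg (by tauto)]
          simpa using ih q ℓ hℓ



theorem count_true_add_count_false (w : List Bool) :
    w.count true + w.count false = w.length := by
  induction w with
  | nil => simp
  | cons x r ih => cases x <;> simp [List.count_cons] <;> omega

theorem lower_bound (hodd : Odd n) (hn : 5 ≤ n) (v : List Bool) (p : ZMod n)
    (hp : ∀ q, run (bAut n) q v = p) : n ^ 2 - 3 * n + 2 ≤ v.length := by
  haveI : NeZero n := ⟨by omega⟩
  set K : ℕ := v.count false with hK
  set qs : ZMod n := p - (K : ZMod n) - 2 * ((n - 1 : ℕ) : ZMod n) with hqs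
  set J : ℕ := jumps n qs v with hJ
  have hrun : qs + (K : ZMod n) + 2 * (J : ZMod n) = p := by
    rw [← run_eq_jumps hn v qs]; exact hp qs
  have hcast : ((2 * J : ℕ) : ZMod n) = ((2 * (n - 1) : ℕ) : ZMod n) := by
    rw [hqs] at hrun
    push_cast
    linear_combination hrun
  have hmod : 2 * J ≡ 2 * (n - 1) [MOD n] := (ZMod.natCast_eq_natCast_iff _ _ _).mp hcast
  have hcop : Nat.gcd 2 n = 1 := Nat.coprime_two_left.mpr hodd
  have hcop' : Nat.gcd n 2 = 1 := Nat.Coprime.symm hcop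
  have hJmod : J ≡ n - 1 [MOD n] := Nat.ModEq.cancel_left_of_coprime hcop' hmod
  have hJge : n - 1 ≤ J := by
    have h1 : J % n = (n - 1) % n := hJmod
    have h2 : (n - 1) % n = n - 1 := Nat.mod_eq_of_lt (by omega)
    have h3 : J % n ≤ J := Nat.mod_le J n
    omega
  have hKge : J * (n - 2) ≤ K + qs.val := by
    have := countB_ge hn v qs 0 (Or.inl rfl)
    simpa using this
  have hqval : qs.val < n := ZMod.val_lt qs
  have hct : J ≤ v.count true := jumps_le_countA v qs
  have hlen : v.count true + K = v.length := count_true_add_count_false v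
  have hmul : (n - 1) * (n - 2) ≤ J * (n - 2) := Nat.mul_le_mul_right _ hJge
  have harr : n ^ 2 - 3 * n + 2 = (n - 1) * (n - 2) := by
    obtain ⟨k, rfl⟩ : ∃ k, n = k + 5 := ⟨n - 5, by omega⟩
    have h1 : (k + 5) ^ 2 = k * k + 10 * k + 25 := by ring
    have h2 : (k + 4) * (k + 3) = k * k + 7 * k + 12 := by ring
    have h3 : k + 5 - 1 = k + 4 := by omega
    have h4 : k + 5 - 2 = k + 3 := by omega
    rw [h3, h4, h1, h2]
    omega
  omega

/-! ### Upper bound: the explicit word is a reset word -/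

/-- The action of one block `a b^(n-2)`. -/
def F (n : ℕ) (q : ZMod n) : ZMod n := bAut n q true + ((n - 2 : ℕ) : ZMod n)

theorem run_replicate_false (hn : 5 ≤ n) (k : ℕ) (q : ZMod n) :
    run (bAut n) q (List.replicate k false) = q + (k : ZMod n) := by
  induction k generalizing q with
  | zero => simp [run]
  | succ m ih =>
    rw [List.replicate_succ, run_cons, bAut_false, ih]
    push_cast; ring

theorem run_block (hn : 5 ≤ n) (q : ZMod n) :
    run (bAut n) q (true :: List.replicate (n - 2) false) = F n q := by
  rw [run_cons, run_replicate_false hn]; rfl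

theorem run_flatten_replicate (hn : 5 ≤ n) (k : ℕ) (q : ZMod n) :
    run (bAut n) q ((List.replicate k (true :: List.replicate (n - 2) false)).flatten) =
      (F n)^[k] q := by
  induction k generalizing q with
  | zero => simp [run]
  | succ m ih =>
    rw [List.replicate_succ, List.flatten_cons, run_append, run_block hn,
      Function.iterate_succ_apply, ih]

theorem F_low (hn : 5 ≤ n) (m : ℕ) (hm : m ≤ n - 3) (h2 : 2 ≤ m) :
    F n ((m : ℕ) : ZMod n) = ((m - 2 : ℕ) : ZMod n) := by
  haveI : NeZero n := ⟨by omega⟩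
  have hv : ((m : ℕ) : ZMod n).val = m := ZMod.val_natCast_of_lt (by omega)
  rw [F, bAut_true_of_ne _ (by omega) (by omega), cast_n_sub hn 2 (by omega)]
  have h : ((m - 2 : ℕ) : ZMod n) + ((2 : ℕ) : ZMod n) = ((m : ℕ) : ZMod n) := by
    rw [← Nat.cast_add]; congr 1; omega
  push_cast at h
  linear_combination -h

theorem F_iter_low (hn : 5 ≤ n) (k m : ℕ) (hm : m ≤ n - 3) (hk : 2 * k ≤ m) :
    (F n)^[k] ((m : ℕ) : ZMod n) = ((m - 2 * k : ℕ) : ZMod n) := by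
  induction k generalizing m with
  | zero => simp
  | succ t ih =>
    rw [Function.iterate_succ_apply, F_low hn m hm (by omega), ih (m - 2) (by omega) (by omega)]
    congr 1; omega

theorem F_fix2 (hn : 5 ≤ n) : F n ((n - 2 : ℕ) : ZMod n) = ((n - 2 : ℕ) : ZMod n) := by
  haveI : NeZero n := ⟨by omega⟩
  rw [F, bAut_true_hi2 _ (val_n_sub hn 2 (by omega) (by omega))]
  ring

theorem F_fix1 (hn : 5 ≤ n) : F n ((n - 1 : ℕ) : ZMod n) = ((n - 1 : ℕ) : ZMod n) := by
  haveI : NeZero n := ⟨by omega⟩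
  rw [F, bAut_true_hi1 _ hn (val_n_sub hn 1 (by omega) (by omega))]
  rw [← Nat.cast_one, ← Nat.cast_add]
  congr 1; omega

theorem F_zero (hn : 5 ≤ n) : F n 0 = ((n - 2 : ℕ) : ZMod n) := by
  haveI : NeZero n := ⟨by omega⟩
  rw [F, bAut_true_of_ne 0 (by rw [ZMod.val_zero]; omega) (by rw [ZMod.val_zero]; omega)]
  ring

theorem F_one (hn : 5 ≤ n) : F n 1 = ((n - 1 : ℕ) : ZMod n) := by
  haveI : NeZero n := ⟨by omega⟩
  have hv : (1 : ZMod n).val = 1 := by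
    rw [ZMod.val_one_eq_one_mod]; exact Nat.mod_eq_of_lt (by omega)
  rw [F, bAut_true_of_ne 1 (by omega) (by omega)]
  rw [show (1 : ZMod n) = ((1 : ℕ) : ZMod n) by push_cast; rfl, ← Nat.cast_add]
  congr 1; omega

theorem F_iter_classify (hodd : Odd n) (hn : 5 ≤ n) (q : ZMod n) :
    (F n)^[(n - 3) / 2] q = 0 ∨ (F n)^[(n - 3) / 2] q = ((n - 2 : ℕ) : ZMod n) ∨
      (F n)^[(n - 3) / 2] q = ((n - 1 : ℕ) : ZMod n) := by
  haveI : NeZero n := ⟨by omega⟩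
  obtain ⟨t, ht⟩ := hodd
  set H : ℕ := (n - 3) / 2 with hH
  have hH2 : 2 * H = n - 3 := by omega
  have hq : q = ((q.val : ℕ) : ZMod n) := (natCast_val_eq q).symm
  set m : ℕ := q.val with hm
  have hmn : m < n := ZMod.val_lt q
  rcases show m = n - 1 ∨ m = n - 2 ∨ m = n - 3 ∨ m ≤ n - 4 by omega with h | h | h | h
  · right; right
    rw [hq, h]; exact Function.iterate_fixed (F_fix1 hn) H
  · right; left
    rw [hq, h]; exact Function.iterate_fixed (F_fix2 hn) H
  · left
    rw [hq, h, F_iter_low hn H (n - 3) le_rfl (by omega)]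
    norm_num [show n - 3 - 2 * H = 0 by omega]
  · rcases Nat.even_or_odd m with ⟨u, hu⟩ | ⟨u, hu⟩
    · -- even, m = 2u, u + 1 ≤ H
      right; left
      have hu1 : u + 1 ≤ H := by omega
      have e1 : (F n)^[u] q = ((0 : ℕ) : ZMod n) := by
        rw [hq, F_iter_low hn u m (by omega) (by omega)]
        congr 1; omega
      have e2 : (F n)^[u + 1] q = ((n - 2 : ℕ) : ZMod n) := by
        rw [Function.iterate_succ_apply', e1]
        norm_num
        exact F_zero hn
      calc (F n)^[H] q = (F n)^[H - (u + 1)] ((F n)^[u + 1] q) := by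
            rw [← Function.iterate_add_apply]; congr 1; omega
        _ = ((n - 2 : ℕ) : ZMod n) := by rw [e2]; exact Function.iterate_fixed (F_fix2 hn) _
    · -- odd, m = 2u + 1
      right; right
      have hu1 : u + 1 ≤ H := by omega
      have e1 : (F n)^[u] q = ((1 : ℕ) : ZMod n) := by
        rw [hq, F_iter_low hn u m (by omega) (by omega)]
        congr 1; omega
      have e2 : (F n)^[u + 1] q = ((n - 1 : ℕ) : ZMod n) := by
        rw [Function.iterate_succ_apply', e1]
        norm_num
        exact F_one hn
      calc (F n)^[H] q = (F n)^[H - (u + 1)] ((F n)^[u + 1] q) := by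
            rw [← Function.iterate_add_apply]; congr 1; omega
        _ = ((n - 1 : ℕ) : ZMod n) := by rw [e2]; exact Function.iterate_fixed (F_fix1 hn) _

end Stmt17

namespace Stmt17

theorem length_flatten_replicate {α : Type*} (k : ℕ) (l : List α) :
    ((List.replicate k l).flatten).length = k * l.length := by
  induction k with
  | zero => simp
  | succ m ih => rw [List.replicate_succ, List.flatten_cons, List.length_append, ih]; ring

theorem run_single {Q A : Type*} (δ : Q → A → Q) (q : Q) (x : A) :
    run δ q [x] = δ q x := rfl

end Stmt17

theorem word_length (n : ℕ) (hodd : Odd n) (hn : 5 ≤ n) :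
    ((List.replicate ((n - 3) / 2) (true :: List.replicate (n - 2) false)).flatten ++ [true]
      ++ List.replicate (n - 3) false
      ++ (List.replicate ((n - 3) / 2) (true :: List.replicate (n - 2) false)).flatten
      ++ [true]).length = n ^ 2 - 3 * n + 2 := by
  obtain ⟨t, ht⟩ := hodd
  obtain ⟨k, rfl⟩ : ∃ k, n = 2 * k + 5 := ⟨t - 2, by omega⟩
  have a1 : 2 * k + 5 - 2 = 2 * k + 3 := by omega
  have a2 : 2 * k + 5 - 3 = 2 * k + 2 := by omega
  have a3 : (2 * k + 2) / 2 = k + 1 := by omega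
  rw [a1, a2, a3]
  simp only [List.length_append, List.length_replicate, List.length_cons,
    List.length_singleton, List.length_nil, Stmt17.length_flatten_replicate]
  have e1 : (k + 1) * (2 * k + 3 + 1) = 2 * (k * k) + 6 * k + 4 := by ring
  have e2 : (2 * k + 5) ^ 2 = 4 * (k * k) + 20 * k + 25 := by ring
  omega

theorem stmt_17_aux (n : ℕ) (hodd : Odd n) (hn : 5 ≤ n) :
    let j : List Bool :=
      (List.replicate ((n - 3) / 2) (true :: List.replicate (n - 2) false)).flatten
    let w : List Bool := j ++ [true] ++ List.replicate (n - 3) false ++ j ++ [true]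
    w.length = n ^ 2 - 3 * n + 2 ∧
    (∃ p : ZMod n, ∀ q, run (bAut n) q w = p) ∧
    (∀ v : List Bool, (∃ p : ZMod n, ∀ q, run (bAut n) q v = p) →
      n ^ 2 - 3 * n + 2 ≤ v.length) := by
  intro j w
  haveI : NeZero n := ⟨by omega⟩
  obtain ⟨t, ht⟩ := id hodd
  have hj : j = (List.replicate ((n - 3) / 2) (true :: List.replicate (n - 2) false)).flatten :=
    rfl
  have hw : w = j ++ [true] ++ List.replicate (n - 3) false ++ j ++ [true] := rfl
  have hrunj : ∀ s : ZMod n, run (bAut n) s j = (Stmt17.F n)^[(n - 3) / 2] s := by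
    intro s; rw [hj]; exact Stmt17.run_flatten_replicate hn _ s
  refine ⟨?_, ⟨0, ?_⟩, ?_⟩
  · rw [hw, hj]; exact word_length n hodd hn
  · intro q
    rw [hw, Stmt17.run_append, Stmt17.run_append, Stmt17.run_append, Stmt17.run_append]
    rw [hrunj q]
    have hclass := Stmt17.F_iter_classify hodd hn q
    -- step 2 : apply a
    have hstep2 : bAut n ((Stmt17.F n)^[(n - 3) / 2] q) true = 0 ∨
        bAut n ((Stmt17.F n)^[(n - 3) / 2] q) true = 1 := by
      rcases hclass with h | h | h <;> rw [h]
      · left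
        exact Stmt17.bAut_true_of_ne 0 (by rw [ZMod.val_zero]; omega)
          (by rw [ZMod.val_zero]; omega)
      · left; exact Stmt17.bAut_true_hi2 _ (Stmt17.val_n_sub hn 2 (by omega) (by omega))
      · right; exact Stmt17.bAut_true_hi1 _ hn (Stmt17.val_n_sub hn 1 (by omega) (by omega))
    simp only [Stmt17.run_single]
    -- step 3 : apply b^(n-3), then j, then a
    have hstep3 : run (bAut n) (bAut n ((Stmt17.F n)^[(n - 3) / 2] q) true)
        (List.replicate (n - 3) false) = ((n - 3 : ℕ) : ZMod n) ∨
        run (bAut n) (bAut n ((Stmt17.F n)^[(n - 3) / 2] q) true)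
        (List.replicate (n - 3) false) = ((n - 2 : ℕ) : ZMod n) := by
      rcases hstep2 with h | h <;> rw [h, Stmt17.run_replicate_false hn]
      · left; rw [zero_add]
      · right; rw [← Nat.cast_one, ← Nat.cast_add]; congr 1; omega
    rcases hstep3 with h | h <;> rw [h, hrunj]
    · rw [Stmt17.F_iter_low hn _ _ le_rfl (by omega)]
      have hz : n - 3 - 2 * ((n - 3) / 2) = 0 := by omega
      rw [hz, Nat.cast_zero]
      exact Stmt17.bAut_true_of_ne 0 (by rw [ZMod.val_zero]; omega)
        (by rw [ZMod.val_zero]; omega)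
    · rw [Function.iterate_fixed (Stmt17.F_fix2 hn) _]
      exact Stmt17.bAut_true_hi2 _ (Stmt17.val_n_sub hn 2 (by omega) (by omega))
  · rintro v ⟨p, hp⟩
    exact Stmt17.lower_bound hodd hn v p hp

/-- For odd `n ≥ 5`, the automaton `ℬ_n` is synchronizing, the word
`(a b^{n-2})^{(n-3)/2} a b^{n-3} (a b^{n-2})^{(n-3)/2} a` of length `n² - 3n + 2`
is a reset word for it, and its reset threshold is exactly `n² - 3n + 2`. -/
theorem stmt_17 (n : ℕ) (hodd : Odd n) (hn : 5 ≤ n) :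
    let j : List Bool :=
      (List.replicate ((n - 3) / 2) (true :: List.replicate (n - 2) false)).flatten
    let w : List Bool := j ++ [true] ++ List.replicate (n - 3) false ++ j ++ [true]
    w.length = n ^ 2 - 3 * n + 2 ∧
    (∃ p : ZMod n, ∀ q, run (bAut n) q w = p) ∧
    (∀ v : List Bool, (∃ p : ZMod n, ∀ q, run (bAut n) q v = p) →
      n ^ 2 - 3 * n + 2 ≤ v.length) := stmt_17_aux n hodd hn
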